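/- arXiv:2411.17153 — 2 statements merged into one kernel-verified Lean document; each statement's English description precedes it below -/
import Mathlib

section
/- Trilinear Hardy-type inequality on the half-line: For every α > 0 there exists a constant C = C(α) such that for all f₁, f₂, f₃ ∈ C¹_c([0,∞)) one has ∫₀^∞ x^{α−1} |f₁(x) f₂(x) f₃(x)| dx ≤ C Σ ‖f_i'‖_{L^∞} · ‖x^{α/2} f_j‖_{L²(0,∞)} · ‖x^{α/2} f_k‖_{L²(0,∞)}, where the sum runs over the permutations (i,j,k) of (1,2,3) with distinct indices. -/
open MeasureTheory Set

noncomputable section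

lemma cs_aux {μ : Measure ℝ} {u v : ℝ → ℝ}
    (hu : AEStronglyMeasurable u μ) (hv : AEStronglyMeasurable v μ)
    (hu0 : 0 ≤ᵐ[μ] u) (hv0 : 0 ≤ᵐ[μ] v)
    (hu2 : Integrable (fun x => u x ^ 2) μ) (hv2 : Integrable (fun x => v x ^ 2) μ) :
    ∫ x, u x * v x ∂μ ≤ Real.sqrt (∫ x, u x ^ 2 ∂μ) * Real.sqrt (∫ x, v x ^ 2 ∂μ) := by
  have hpq : (2:ℝ).HolderConjugate 2 := Real.HolderConjugate.two_two
  have h2 : ENNReal.ofReal (2:ℝ) = 2 := by norm_num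
  have h := MeasureTheory.integral_mul_le_Lp_mul_Lq_of_nonneg hpq hu0 hv0
    (by rw [h2]; exact (memLp_two_iff_integrable_sq hu).2 hu2)
    (by rw [h2]; exact (memLp_two_iff_integrable_sq hv).2 hv2)
  have e1 : ∀ w : ℝ, w ^ (2:ℝ) = w ^ 2 := fun w => by
    rw [show (2:ℝ) = ((2:ℕ):ℝ) by norm_num, Real.rpow_natCast]
  simp only [e1] at h
  rw [Real.sqrt_eq_rpow, Real.sqrt_eq_rpow]
  exact h

lemma int_aux {α : ℝ} (hα : 0 ≤ α) {u : ℝ → ℝ} (hu : Continuous u)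
    (hcs : HasCompactSupport u) :
    IntegrableOn (fun t : ℝ => t ^ α * u t) (Ioi 0) :=
  (((Real.continuous_rpow_const hα).mul hu).integrable_of_hasCompactSupport
    (HasCompactSupport.intro hcs
      (fun x hx => by simp [image_eq_zero_of_notMem_tsupport hx]))).integrableOn

lemma swap_aux {α : ℝ} (hα : 0 < α) {D : ℝ → ℝ} (hD : Continuous D) :
    ∫⁻ x in Ioi 0, ENNReal.ofReal (x^(α-1)) * ∫⁻ t in Ioi x, ENNReal.ofReal |D t| =
    ∫⁻ t in Ioi 0, ENNReal.ofReal (t^α/α) * ENNReal.ofReal |D t| := by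
  set g : ℝ → ENNReal := fun t => ENNReal.ofReal |D t| with hg
  have hgm : Measurable g := (continuous_abs.comp hD).measurable.ennreal_ofReal
  set S : Set (ℝ × ℝ) := {p | 0 < p.1 ∧ p.1 < p.2} with hS
  have hSm : MeasurableSet S :=
    (measurableSet_lt measurable_const measurable_fst).inter
      (measurableSet_lt measurable_fst measurable_snd)
  set φ : ℝ × ℝ → ENNReal := fun p => ENNReal.ofReal (p.1 ^ (α-1)) * g p.2 with hφ
  have hφm : Measurable φ := by
    apply Measurable.mul (f := fun p : ℝ × ℝ => ENNReal.ofReal (p.1 ^ (α-1))) (g := fun p => g p.2)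
    · exact (measurable_fst.pow_const _).ennreal_ofReal
    · exact hgm.comp measurable_snd
  set F : ℝ × ℝ → ENNReal := S.indicator φ with hF
  have hFm : Measurable F := hφm.indicator hSm
  have swap : ∫⁻ x, ∫⁻ t, F (x, t) = ∫⁻ t, ∫⁻ x, F (x, t) :=
    lintegral_lintegral_swap hFm.aemeasurable
  have lhs_eq : ∫⁻ x, ∫⁻ t, F (x, t) =
      ∫⁻ x in Ioi 0, ENNReal.ofReal (x^(α-1)) * ∫⁻ t in Ioi x, g t := by
    calc ∫⁻ x, ∫⁻ t, F (x, t)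
        = ∫⁻ x, (Ioi (0:ℝ)).indicator
            (fun x => ENNReal.ofReal (x^(α-1)) * ∫⁻ t in Ioi x, g t) x := by
          refine lintegral_congr fun x => ?_
          by_cases hx : 0 < x
          · rw [indicator_of_mem (mem_Ioi.2 hx)]
            have hFx : ∀ t, F (x, t) =
                (Ioi x).indicator (fun t => ENNReal.ofReal (x^(α-1)) * g t) t := by
              intro t
              simp only [hF]
              by_cases hxt : x < t
              · rw [indicator_of_mem (mem_Ioi.2 hxt),
                  indicator_of_mem (show (x,t) ∈ S from ⟨hx, hxt⟩)]
              · rw [indicator_of_notMem (fun h => hxt (mem_Ioi.1 h)),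
                  indicator_of_notMem (fun (h : (x,t) ∈ S) => hxt h.2)]
            simp_rw [hFx]
            rw [lintegral_indicator measurableSet_Ioi,
              lintegral_const_mul' _ _ ENNReal.ofReal_ne_top]
          · rw [indicator_of_notMem (by simpa using hx)]
            have h0 : ∀ t, F (x, t) = 0 := fun t =>
              indicator_of_notMem (fun (h : (x,t) ∈ S) => hx h.1) _
            simp [h0]
      _ = ∫⁻ x in Ioi 0, ENNReal.ofReal (x^(α-1)) * ∫⁻ t in Ioi x, g t :=
          lintegral_indicator measurableSet_Ioi _
  have rhs_eq : ∫⁻ t, ∫⁻ x, F (x, t) =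
      ∫⁻ t in Ioi 0, ENNReal.ofReal (t^α/α) * g t := by
    calc ∫⁻ t, ∫⁻ x, F (x, t)
        = ∫⁻ t, (Ioi (0:ℝ)).indicator
            (fun t => ENNReal.ofReal (t^α/α) * g t) t := by
          refine lintegral_congr fun t => ?_
          have hFt : ∀ x, F (x, t) =
              (Ioo 0 t).indicator (fun x => ENNReal.ofReal (x^(α-1)) * g t) x := by
            intro x
            simp only [hF]
            by_cases hxt : 0 < x ∧ x < t
            · rw [indicator_of_mem (show x ∈ Ioo 0 t from ⟨hxt.1, hxt.2⟩),
                indicator_of_mem (show (x,t) ∈ S from hxt)]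
            · rw [indicator_of_notMem (fun (h : (x,t) ∈ S) => hxt h),
                indicator_of_notMem (fun (h : x ∈ Ioo 0 t) => hxt ⟨h.1, h.2⟩)]
          simp_rw [hFt]
          rw [lintegral_indicator measurableSet_Ioo,
            lintegral_mul_const' _ _ (by simp [hg] : g t ≠ ⊤)]
          by_cases ht : 0 < t
          · rw [indicator_of_mem (mem_Ioi.2 ht)]
            congr 1
            have hInt : IntegrableOn (fun x : ℝ => x ^ (α-1)) (Ioo 0 t) := by
              have h1 := intervalIntegral.intervalIntegrable_rpow'
                (by linarith : (-1:ℝ) < α-1) (a := 0) (b := t)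
              rw [intervalIntegrable_iff_integrableOn_Ioc_of_le ht.le] at h1
              exact h1.mono_set Ioo_subset_Ioc_self
            have hval : ∫ x in Ioo 0 t, x^(α-1) = t^α/α := by
              rw [← MeasureTheory.integral_Ioc_eq_integral_Ioo,
                ← intervalIntegral.integral_of_le ht.le,
                integral_rpow (Or.inl (by linarith))]
              rw [show α - 1 + 1 = α by ring, Real.zero_rpow hα.ne']
              ring
            rw [← hval]
            rw [← ofReal_integral_eq_lintegral_ofReal hInt
              ((ae_restrict_iff' measurableSet_Ioo).2 (Filter.Eventually.of_forall
                fun x hx => Real.rpow_nonneg hx.1.le _))]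
          · rw [indicator_of_notMem (by simpa using ht), Ioo_eq_empty (by simpa using ht),
              Measure.restrict_empty, lintegral_zero_measure, zero_mul]
      _ = ∫⁻ t in Ioi 0, ENNReal.ofReal (t^α/α) * g t :=
          lintegral_indicator measurableSet_Ioi _
  rw [← lhs_eq, swap, rhs_eq]

/-- **Trilinear Hardy-type inequality on the half-line** (inequality (3.20)):
for `α > 0` and `f₁, f₂, f₃ ∈ C¹_c([0,∞))`,
`∫₀^∞ x^{α−1}|f₁f₂f₃| dx ≲_α Σ_{distinct i,j,k} ‖f_i'‖_{L^∞}‖x^{α/2}f_j‖_{L²}‖x^{α/2}f_k‖_{L²}`. -/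
theorem trilinear_hardy {α : ℝ} (hα : 0 < α) :
    ∃ C > (0:ℝ), ∀ (f₁ f₂ f₃ : ℝ → ℝ) (L₁ L₂ L₃ : ℝ),
      ContDiff ℝ 1 f₁ → ContDiff ℝ 1 f₂ → ContDiff ℝ 1 f₃ →
      HasCompactSupport f₁ → HasCompactSupport f₂ → HasCompactSupport f₃ →
      (∀ x : ℝ, 0 ≤ x → |deriv f₁ x| ≤ L₁) →
      (∀ x : ℝ, 0 ≤ x → |deriv f₂ x| ≤ L₂) →
      (∀ x : ℝ, 0 ≤ x → |deriv f₃ x| ≤ L₃) →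
      (∫ x in Ioi (0:ℝ), x ^ (α - 1) * |f₁ x * f₂ x * f₃ x|) ≤
        C * (L₁ * Real.sqrt (∫ x in Ioi (0:ℝ), x ^ α * (f₂ x) ^ 2) *
                Real.sqrt (∫ x in Ioi (0:ℝ), x ^ α * (f₃ x) ^ 2)
          + L₂ * Real.sqrt (∫ x in Ioi (0:ℝ), x ^ α * (f₁ x) ^ 2) *
                Real.sqrt (∫ x in Ioi (0:ℝ), x ^ α * (f₃ x) ^ 2)
          + L₃ * Real.sqrt (∫ x in Ioi (0:ℝ), x ^ α * (f₁ x) ^ 2) *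
                Real.sqrt (∫ x in Ioi (0:ℝ), x ^ α * (f₂ x) ^ 2)) := by
  refine ⟨1/α, by positivity, ?_⟩
  intro f₁ f₂ f₃ L₁ L₂ L₃ hf₁ hf₂ hf₃ hc₁ hc₂ hc₃ hL₁ hL₂ hL₃
  have hcf₁ : Continuous f₁ := hf₁.continuous
  have hcf₂ : Continuous f₂ := hf₂.continuous
  have hcf₃ : Continuous f₃ := hf₃.continuous
  set G : ℝ → ℝ := fun x => f₁ x * f₂ x * f₃ x with hGdef
  have hGd : ContDiff ℝ 1 G := (hf₁.mul hf₂).mul hf₃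
  have hGs : HasCompactSupport G := (hc₁.mul_right).mul_right
  have hGcont : Continuous G := hGd.continuous
  have hG' : Continuous (deriv G) := hGd.continuous_deriv le_rfl
  have hint : Integrable (fun t => |deriv G t|) :=
    (hG'.integrable_of_hasCompactSupport hGs.deriv).abs
  -- Step A: pointwise bound via FTC
  have key : ∀ x : ℝ, 0 ≤ x → |G x| ≤ ∫ t in Ioi x, |deriv G t| := by
    intro x hx
    obtain ⟨R, hR0, hR⟩ := hGs.exists_pos_le_norm
    set b := max x R with hb
    have hxb : x ≤ b := le_max_left _ _
    have hbR : R ≤ b := le_max_right _ _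
    have hGb : G b = 0 := hR b (by
      rw [Real.norm_eq_abs, abs_of_nonneg (hR0.le.trans hbR)]; exact hbR)
    have hFTC : ∫ y in x..b, deriv G y = G b - G x :=
      intervalIntegral.integral_deriv_eq_sub
        (fun y _ => (hGd.differentiable one_ne_zero).differentiableAt)
        (hG'.intervalIntegrable _ _)
    have hGx : |G x| = |∫ y in x..b, deriv G y| := by
      rw [hFTC, hGb, zero_sub, abs_neg]
    rw [hGx]
    calc |∫ y in x..b, deriv G y| ≤ ∫ y in x..b, |deriv G y| :=
          intervalIntegral.abs_integral_le_integral_abs hxb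
      _ = ∫ y in Ioc x b, |deriv G y| := intervalIntegral.integral_of_le hxb
      _ ≤ ∫ t in Ioi x, |deriv G t| :=
          setIntegral_mono_set hint.integrableOn
            (Filter.Eventually.of_forall fun t => abs_nonneg _)
            (HasSubset.Subset.eventuallyLE Ioc_subset_Ioi_self)
  -- derivative formula and bound
  have hd : ∀ t : ℝ, deriv G t =
      deriv f₁ t * f₂ t * f₃ t + f₁ t * deriv f₂ t * f₃ t + f₁ t * f₂ t * deriv f₃ t := by
    intro t
    have h1 : HasDerivAt f₁ (deriv f₁ t) t := (hf₁.differentiable one_ne_zero t).hasDerivAt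
    have h2 : HasDerivAt f₂ (deriv f₂ t) t := (hf₂.differentiable one_ne_zero t).hasDerivAt
    have h3 : HasDerivAt f₃ (deriv f₃ t) t := (hf₃.differentiable one_ne_zero t).hasDerivAt
    have hG : HasDerivAt G
        ((deriv f₁ t * f₂ t + f₁ t * deriv f₂ t) * f₃ t + f₁ t * f₂ t * deriv f₃ t) t :=
      (h1.mul h2).mul h3
    rw [hG.deriv]; ring
  set h : ℝ → ℝ := fun t =>
    L₁ * |f₂ t| * |f₃ t| + |f₁ t| * L₂ * |f₃ t| + |f₁ t| * |f₂ t| * L₃ with hhdef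
  have hL₁0 : 0 ≤ L₁ := (abs_nonneg _).trans (hL₁ 0 le_rfl)
  have hL₂0 : 0 ≤ L₂ := (abs_nonneg _).trans (hL₂ 0 le_rfl)
  have hL₃0 : 0 ≤ L₃ := (abs_nonneg _).trans (hL₃ 0 le_rfl)
  have hDb : ∀ t : ℝ, 0 ≤ t → |deriv G t| ≤ h t := by
    intro t ht
    rw [hd t]
    calc |deriv f₁ t * f₂ t * f₃ t + f₁ t * deriv f₂ t * f₃ t + f₁ t * f₂ t * deriv f₃ t|
        ≤ |deriv f₁ t * f₂ t * f₃ t| + |f₁ t * deriv f₂ t * f₃ t| + |f₁ t * f₂ t * deriv f₃ t| :=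
          abs_add_three _ _ _
      _ = |deriv f₁ t| * |f₂ t| * |f₃ t| + |f₁ t| * |deriv f₂ t| * |f₃ t|
            + |f₁ t| * |f₂ t| * |deriv f₃ t| := by simp [abs_mul]
      _ ≤ h t := by
          simp only [hhdef]
          gcongr
          exacts [hL₁ t ht, hL₂ t ht, hL₃ t ht]
  -- continuity and integrability of h
  have hA₁ : Continuous fun t => |f₁ t| := continuous_abs.comp hcf₁
  have hA₂ : Continuous fun t => |f₂ t| := continuous_abs.comp hcf₂
  have hA₃ : Continuous fun t => |f₃ t| := continuous_abs.comp hcf₃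
  have hcont_h : Continuous h := by
    rw [hhdef]
    exact (((continuous_const.mul hA₂).mul hA₃).add
      (((hA₁.mul continuous_const).mul hA₃))).add ((hA₁.mul hA₂).mul continuous_const)
  have hsh : HasCompactSupport h := by
    apply HasCompactSupport.intro (hc₁.union hc₂)
    intro x hx
    have h1 : f₁ x = 0 := image_eq_zero_of_notMem_tsupport (fun hm => hx (mem_union_left _ hm))
    have h2 : f₂ x = 0 := image_eq_zero_of_notMem_tsupport (fun hm => hx (mem_union_right _ hm))
    simp [hhdef, h1, h2]
  -- lintegral chain
  have measG : AEStronglyMeasurable (fun x => x^(α-1) * |G x|) (volume.restrict (Ioi 0)) :=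
    ((measurable_id'.pow_const _).mul
      ((continuous_abs.comp hGcont).measurable)).aestronglyMeasurable
  have I_eq : ∫ x in Ioi 0, x^(α-1) * |G x| =
      (∫⁻ x in Ioi 0, ENNReal.ofReal (x^(α-1) * |G x|)).toReal :=
    integral_eq_lintegral_of_nonneg_ae
      ((ae_restrict_iff' measurableSet_Ioi).2 (Filter.Eventually.of_forall fun x hx =>
        mul_nonneg (Real.rpow_nonneg (le_of_lt hx) _) (abs_nonneg _))) measG
  have step1 : (∫⁻ x in Ioi 0, ENNReal.ofReal (x^(α-1) * |G x|)) ≤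
      ∫⁻ x in Ioi 0, ENNReal.ofReal (x^(α-1)) * ∫⁻ t in Ioi x, ENNReal.ofReal |deriv G t| := by
    refine lintegral_mono_ae ((ae_restrict_iff' measurableSet_Ioi).2
      (Filter.Eventually.of_forall fun x hx => ?_))
    have hx0 : 0 < x := hx
    rw [ENNReal.ofReal_mul (Real.rpow_nonneg hx0.le _)]
    refine mul_le_mul_right ?_ _
    calc ENNReal.ofReal |G x| ≤ ENNReal.ofReal (∫ t in Ioi x, |deriv G t|) :=
          ENNReal.ofReal_le_ofReal (key x hx0.le)
      _ = ∫⁻ t in Ioi x, ENNReal.ofReal |deriv G t| :=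
          ofReal_integral_eq_lintegral_ofReal hint.integrableOn
            (Filter.Eventually.of_forall fun t => abs_nonneg _)
  have step2 := swap_aux hα hG'
  have hJ : IntegrableOn (fun t => t^α/α * |deriv G t|) (Ioi 0) := by
    apply Integrable.integrableOn
    apply Continuous.integrable_of_hasCompactSupport
    · exact ((Real.continuous_rpow_const hα.le).div_const α).mul (continuous_abs.comp hG')
    · apply HasCompactSupport.intro hGs.deriv
      intro x hx
      simp [image_eq_zero_of_notMem_tsupport hx]
  have step3 : (∫⁻ t in Ioi 0, ENNReal.ofReal (t^α/α) * ENNReal.ofReal |deriv G t|) =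
      ENNReal.ofReal (∫ t in Ioi 0, t^α/α * |deriv G t|) := by
    rw [ofReal_integral_eq_lintegral_ofReal hJ
      ((ae_restrict_iff' measurableSet_Ioi).2 (Filter.Eventually.of_forall fun t ht =>
        mul_nonneg (div_nonneg (Real.rpow_nonneg (le_of_lt ht) _) hα.le) (abs_nonneg _)))]
    refine setLIntegral_congr_fun measurableSet_Ioi (fun t ht => ?_)
    exact (ENNReal.ofReal_mul (div_nonneg (Real.rpow_nonneg (le_of_lt ht) _) hα.le)).symm
  have main1 : ∫ x in Ioi 0, x^(α-1) * |G x| ≤ ∫ t in Ioi 0, t^α/α * |deriv G t| := by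
    rw [I_eq]
    refine ENNReal.toReal_le_of_le_ofReal
      (setIntegral_nonneg measurableSet_Ioi fun t ht =>
        mul_nonneg (div_nonneg (Real.rpow_nonneg (le_of_lt ht) _) hα.le) (abs_nonneg _)) ?_
    calc (∫⁻ x in Ioi 0, ENNReal.ofReal (x^(α-1) * |G x|))
        ≤ _ := step1
      _ = _ := step2
      _ = _ := step3
  have hT : IntegrableOn (fun t => t^α * |deriv G t|) (Ioi 0) := by
    apply int_aux hα.le (continuous_abs.comp hG')
    apply HasCompactSupport.intro hGs.deriv
    intro x hx
    simp [image_eq_zero_of_notMem_tsupport hx]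
  have main2 : ∫ t in Ioi 0, t^α/α * |deriv G t| =
      (1/α) * ∫ t in Ioi 0, t^α * |deriv G t| := by
    rw [← integral_const_mul]
    refine setIntegral_congr_fun measurableSet_Ioi fun t _ => ?_
    ring
  have main3 : ∫ t in Ioi 0, t^α * |deriv G t| ≤ ∫ t in Ioi 0, t^α * h t :=
    setIntegral_mono_on hT (int_aux hα.le hcont_h hsh) measurableSet_Ioi
      (fun t ht => mul_le_mul_of_nonneg_left (hDb t (le_of_lt ht))
        (Real.rpow_nonneg (le_of_lt ht) _))
  -- integrability of summands
  have mkcs : ∀ (w : ℝ → ℝ), HasCompactSupport w → ∀ (c : ℝ → ℝ),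
      (∀ x, w x = 0 → c x = 0) → HasCompactSupport c := by
    intro w hw c hc
    exact HasCompactSupport.intro hw fun x hx => hc x (image_eq_zero_of_notMem_tsupport hx)
  have ia : IntegrableOn (fun t => t^α * (L₁ * |f₂ t| * |f₃ t|)) (Ioi 0) :=
    int_aux hα.le ((continuous_const.mul hA₂).mul hA₃)
      (mkcs f₂ hc₂ _ (fun x hx => by simp [hx]))
  have ib : IntegrableOn (fun t => t^α * (|f₁ t| * L₂ * |f₃ t|)) (Ioi 0) :=
    int_aux hα.le ((hA₁.mul continuous_const).mul hA₃)
      (mkcs f₁ hc₁ _ (fun x hx => by simp [hx]))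
  have ic : IntegrableOn (fun t => t^α * (|f₁ t| * |f₂ t| * L₃)) (Ioi 0) :=
    int_aux hα.le ((hA₁.mul hA₂).mul continuous_const)
      (mkcs f₁ hc₁ _ (fun x hx => by simp [hx]))
  have split : ∫ t in Ioi 0, t^α * h t =
      (∫ t in Ioi 0, t^α * (L₁ * |f₂ t| * |f₃ t|)) +
      (∫ t in Ioi 0, t^α * (|f₁ t| * L₂ * |f₃ t|)) +
      (∫ t in Ioi 0, t^α * (|f₁ t| * |f₂ t| * L₃)) := by
    have e : (fun t => t^α * h t) = fun t =>
        t^α * (L₁ * |f₂ t| * |f₃ t|) + (t^α * (|f₁ t| * L₂ * |f₃ t|)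
          + t^α * (|f₁ t| * |f₂ t| * L₃)) := by
      funext t; rw [hhdef]; ring
    have ibc : Integrable (fun t => t^α * (|f₁ t| * L₂ * |f₃ t|)
        + t^α * (|f₁ t| * |f₂ t| * L₃)) (volume.restrict (Ioi 0)) := ib.add ic
    rw [e, integral_add ia ibc, integral_add ib ic]; ring
  -- Cauchy-Schwarz for each pair
  have CSgen : ∀ (u v : ℝ → ℝ), Continuous u → Continuous v →
      HasCompactSupport u → HasCompactSupport v →
      ∫ t in Ioi 0, t^α * (|u t| * |v t|) ≤
        Real.sqrt (∫ x in Ioi 0, x^α * (u x)^2) * Real.sqrt (∫ x in Ioi 0, x^α * (v x)^2) := by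
    intro u v hu hv hsu hsv
    have hrw : ∀ t : ℝ, t ∈ Ioi (0:ℝ) →
        t^α * (|u t| * |v t|) = (t^(α/2) * |u t|) * (t^(α/2) * |v t|) := by
      intro t ht
      rw [show (t^(α/2) * |u t|) * (t^(α/2) * |v t|)
          = (t^(α/2) * t^(α/2)) * (|u t| * |v t|) by ring,
        ← Real.rpow_add ht, show α/2 + α/2 = α by ring]
    have hsq : ∀ (w : ℝ → ℝ) (t : ℝ), 0 < t → (t^(α/2) * |w t|)^2 = t^α * (w t)^2 := by
      intro w t ht
      rw [mul_pow, sq_abs, ← Real.rpow_natCast (t^(α/2)) 2, ← Real.rpow_mul ht.le]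
      norm_num
    have hwint : ∀ (w : ℝ → ℝ), Continuous w → HasCompactSupport w →
        IntegrableOn (fun t => t^α * (w t)^2) (Ioi 0) := by
      intro w hw hws
      exact int_aux hα.le (hw.pow 2)
        (HasCompactSupport.intro hws fun x hx => by
          simp [image_eq_zero_of_notMem_tsupport hx])
    have hmeas : ∀ (w : ℝ → ℝ), Continuous w →
        AEStronglyMeasurable (fun t => t^(α/2) * |w t|) (volume.restrict (Ioi 0)) := by
      intro w hw
      exact ((measurable_id'.pow_const _).mul
        ((continuous_abs.comp hw).measurable)).aestronglyMeasurable
    have hnn : ∀ (w : ℝ → ℝ),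
        0 ≤ᵐ[volume.restrict (Ioi (0:ℝ))] fun t => t^(α/2) * |w t| := by
      intro w
      exact (ae_restrict_iff' measurableSet_Ioi).2 (Filter.Eventually.of_forall fun t ht =>
        mul_nonneg (Real.rpow_nonneg (le_of_lt ht) _) (abs_nonneg _))
    have hsqint : ∀ (w : ℝ → ℝ), Continuous w → HasCompactSupport w →
        Integrable (fun t => (t^(α/2) * |w t|)^2) (volume.restrict (Ioi 0)) := by
      intro w hw hws
      refine (hwint w hw hws).congr ?_
      exact (ae_restrict_iff' measurableSet_Ioi).2
        (Filter.Eventually.of_forall fun t ht => (hsq w t ht).symm)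
    have hsqeq : ∀ (w : ℝ → ℝ),
        ∫ t in Ioi 0, (t^(α/2) * |w t|)^2 = ∫ x in Ioi 0, x^α * (w x)^2 :=
      fun w => setIntegral_congr_fun measurableSet_Ioi fun t ht => hsq w t ht
    calc ∫ t in Ioi 0, t^α * (|u t| * |v t|)
        = ∫ t in Ioi 0, (t^(α/2) * |u t|) * (t^(α/2) * |v t|) :=
          setIntegral_congr_fun measurableSet_Ioi hrw
      _ ≤ Real.sqrt (∫ t in Ioi 0, (t^(α/2) * |u t|)^2) *
          Real.sqrt (∫ t in Ioi 0, (t^(α/2) * |v t|)^2) :=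
          cs_aux (hmeas u hu) (hmeas v hv) (hnn u) (hnn v)
            (hsqint u hu hsu) (hsqint v hv hsv)
      _ = _ := by rw [hsqeq u, hsqeq v]
  have t1 : ∫ t in Ioi 0, t^α * (L₁ * |f₂ t| * |f₃ t|) =
      L₁ * ∫ t in Ioi 0, t^α * (|f₂ t| * |f₃ t|) := by
    rw [← integral_const_mul]
    exact setIntegral_congr_fun measurableSet_Ioi fun t _ => by ring
  have t2 : ∫ t in Ioi 0, t^α * (|f₁ t| * L₂ * |f₃ t|) =
      L₂ * ∫ t in Ioi 0, t^α * (|f₁ t| * |f₃ t|) := by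
    rw [← integral_const_mul]
    exact setIntegral_congr_fun measurableSet_Ioi fun t _ => by ring
  have t3 : ∫ t in Ioi 0, t^α * (|f₁ t| * |f₂ t| * L₃) =
      L₃ * ∫ t in Ioi 0, t^α * (|f₁ t| * |f₂ t|) := by
    rw [← integral_const_mul]
    exact setIntegral_congr_fun measurableSet_Ioi fun t _ => by ring
  -- final assembly
  calc ∫ x in Ioi 0, x^(α-1) * |G x|
      ≤ ∫ t in Ioi 0, t^α/α * |deriv G t| := main1
    _ = (1/α) * ∫ t in Ioi 0, t^α * |deriv G t| := main2
    _ ≤ (1/α) * ∫ t in Ioi 0, t^α * h t :=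
        mul_le_mul_of_nonneg_left main3 (by positivity)
    _ = (1/α) * ((∫ t in Ioi 0, t^α * (L₁ * |f₂ t| * |f₃ t|)) +
        (∫ t in Ioi 0, t^α * (|f₁ t| * L₂ * |f₃ t|)) +
        (∫ t in Ioi 0, t^α * (|f₁ t| * |f₂ t| * L₃))) := by rw [split]
    _ ≤ (1/α) * (L₁ * Real.sqrt (∫ x in Ioi (0:ℝ), x ^ α * (f₂ x) ^ 2) *
                Real.sqrt (∫ x in Ioi (0:ℝ), x ^ α * (f₃ x) ^ 2)
          + L₂ * Real.sqrt (∫ x in Ioi (0:ℝ), x ^ α * (f₁ x) ^ 2) *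
                Real.sqrt (∫ x in Ioi (0:ℝ), x ^ α * (f₃ x) ^ 2)
          + L₃ * Real.sqrt (∫ x in Ioi (0:ℝ), x ^ α * (f₁ x) ^ 2) *
                Real.sqrt (∫ x in Ioi (0:ℝ), x ^ α * (f₂ x) ^ 2)) := by
        rw [t1, t2, t3]
        have c1 := CSgen f₂ f₃ hcf₂ hcf₃ hc₂ hc₃
        have c2 := CSgen f₁ f₃ hcf₁ hcf₃ hc₁ hc₃
        have c3 := CSgen f₁ f₂ hcf₁ hcf₂ hc₁ hc₂
        have h1α : (0:ℝ) ≤ 1/α := by positivity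
        refine mul_le_mul_of_nonneg_left ?_ h1α
        refine add_le_add (add_le_add ?_ ?_) ?_
        · calc L₁ * ∫ t in Ioi 0, t^α * (|f₂ t| * |f₃ t|)
              ≤ L₁ * (Real.sqrt (∫ x in Ioi 0, x^α * (f₂ x)^2) *
                  Real.sqrt (∫ x in Ioi 0, x^α * (f₃ x)^2)) :=
                mul_le_mul_of_nonneg_left c1 hL₁0
            _ = _ := by ring
        · calc L₂ * ∫ t in Ioi 0, t^α * (|f₁ t| * |f₃ t|)
              ≤ L₂ * (Real.sqrt (∫ x in Ioi 0, x^α * (f₁ x)^2) *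
                  Real.sqrt (∫ x in Ioi 0, x^α * (f₃ x)^2)) :=
                mul_le_mul_of_nonneg_left c2 hL₂0
            _ = _ := by ring
        · calc L₃ * ∫ t in Ioi 0, t^α * (|f₁ t| * |f₂ t|)
              ≤ L₃ * (Real.sqrt (∫ x in Ioi 0, x^α * (f₁ x)^2) *
                  Real.sqrt (∫ x in Ioi 0, x^α * (f₂ x)^2)) :=
                mul_le_mul_of_nonneg_left c3 hL₃0
            _ = _ := by ring
end
end

section
/- Self-adjointness (integration-by-parts) formula for L₂ + L₃: Let β > 0, α := 1/β, let q : ℝ^d → ℝ be a nonnegative, compactly supported C¹ function, and set Ω := {q > 0}. For a vector field w define componentwise ((L₂+L₃)w)_i := β Σ_j [ q^{−α} ∂_j( q^{1+α} ∂_j w_i ) + ∂_i q · ∂_j w_j − ∂_j q · ∂_i w_j ]. Then for all w, φ ∈ C²(ℝ^d; ℝ^d): ∫_Ω q^{α} ((L₂+L₃)w)·φ dx = −(β²/(1+β)) ∫_Ω q^{1+α} [ (1+α) ∇w : ∇φ + (div w)(div φ) − tr(∇w·∇φ) ] dx, where ∇w : ∇φ := Σ_{i,j} ∂_i w_j ∂_i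 φ_j and tr(∇w·∇φ) := Σ_{i,j} ∂_i w_j ∂_j φ_i. In particular L₂ + L₃ is symmetric in L²(Ω; q^{α} dx). -/
open MeasureTheory Set

noncomputable section

/-- `d`-dimensional Euclidean space. -/
abbrev Euc (d : ℕ) : Type := EuclideanSpace ℝ (Fin d)

variable {d : ℕ}

/-- The partial derivative `∂_j g` of a scalar field. -/
def pd (g : Euc d → ℝ) (j : Fin d) (x : Euc d) : ℝ :=
  fderiv ℝ g x (EuclideanSpace.single j 1)

/-- The degenerate elliptic operator
`((L₂+L₃)w)_i = βΣ_j [ q^{−α}∂_j(q^{1+α}∂_j w_i) + ∂_i q·∂_j w_j − ∂_j q·∂_i w_j ]`. -/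
def L23op (β αc : ℝ) (q : Euc d → ℝ) (w : Euc d → Euc d) (x : Euc d) : Euc d :=
  (EuclideanSpace.equiv (Fin d) ℝ).symm (fun i =>
    β * ∑ j, ((q x) ^ (-αc) *
        pd (fun y => (q y) ^ (1 + αc) * pd (fun z => w z i) j y) j x
      + pd q i x * pd (fun z => w z j) j x
      - pd q j x * pd (fun z => w z j) i x))

/-- `∇w : ∇φ = Σ_{i,j} ∂_i w_j ∂_i φ_j`. -/
def gradContr (w φ : Euc d → Euc d) (x : Euc d) : ℝ :=
  ∑ i, ∑ j, pd (fun z => w z j) i x * pd (fun z => φ z j) i x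

/-- `div w = Σ_j ∂_j w_j`. -/
def diverg (w : Euc d → Euc d) (x : Euc d) : ℝ :=
  ∑ j, pd (fun z => w z j) j x

/-- `tr(∇w·∇φ) = Σ_{i,j} ∂_i w_j ∂_j φ_i`. -/
def gradTrace (w φ : Euc d → Euc d) (x : Euc d) : ℝ :=
  ∑ i, ∑ j, pd (fun z => w z j) i x * pd (fun z => φ z i) j x

lemma euc_equiv_symm_apply {d : ℕ} (f : Fin d → ℝ) (i : Fin d) :
    (EuclideanSpace.equiv (Fin d) ℝ).symm f i = f i := rfl

lemma pd_mul {f g : Euc d → ℝ} {x : Euc d} (hf : DifferentiableAt ℝ f x)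
    (hg : DifferentiableAt ℝ g x) (k : Fin d) :
    pd (fun y => f y * g y) k x = pd f k x * g x + f x * pd g k x := by
  simp only [pd, fderiv_fun_mul hf hg, ContinuousLinearMap.add_apply,
    ContinuousLinearMap.smul_apply, smul_eq_mul]
  ring

lemma contDiff_pd {g : Euc d → ℝ} (hg : ContDiff ℝ 2 g) (j : Fin d) :
    ContDiff ℝ 1 (fun x => pd g j x) := by
  simp only [pd]
  exact (hg.fderiv_right (by norm_num)).clm_apply contDiff_const

lemma cont_pd {g : Euc d → ℝ} (hg : ContDiff ℝ 1 g) (j : Fin d) :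
    Continuous (fun x => pd g j x) := by
  simp only [pd]
  exact (hg.continuous_fderiv (by norm_num)).clm_apply continuous_const

lemma pd_comm {g : Euc d → ℝ} (hg : ContDiff ℝ 2 g) (i j : Fin d) (x : Euc d) :
    pd (fun y => pd g i y) j x = pd (fun y => pd g j y) i x := by
  have hsymm : IsSymmSndFDerivAt ℝ g x :=
    hg.contDiffAt.isSymmSndFDerivAt (by norm_num)
  have hdiff : DifferentiableAt ℝ (fderiv ℝ g) x :=
    ((hg.fderiv_right (m := 1) (by norm_num)).differentiable (by norm_num)) x
  simp only [pd]
  rw [fderiv_clm_apply hdiff (differentiableAt_const _),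
    fderiv_clm_apply hdiff (differentiableAt_const _)]
  simp [hsymm (EuclideanSpace.single j 1) (EuclideanSpace.single i 1)]

/-- Integration by parts: if `u` is `C¹` compactly supported and `h` is `C¹`, then
`∫ ∂_k u · h = - ∫ u · ∂_k h`. -/
lemma ibp_pd {u h : Euc d → ℝ} (hu : ContDiff ℝ 1 u) (hcu : HasCompactSupport u)
    (hh : ContDiff ℝ 1 h) (k : Fin d) :
    ∫ x, pd u k x * h x = - ∫ x, u x * pd h k x := by
  have hcu' : HasCompactSupport (fun x => pd u k x) :=
    hcu.fderiv_apply ℝ (EuclideanSpace.single k 1)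
  have h1 : Integrable (fun x => pd u k x * h x) :=
    ((cont_pd hu k).mul hh.continuous).integrable_of_hasCompactSupport (hcu'.mul_right)
  have h2 : Integrable (fun x => u x * pd h k x) :=
    (hu.continuous.mul (cont_pd hh k)).integrable_of_hasCompactSupport (hcu.mul_right)
  have h3 : Integrable (fun x => u x * h x) :=
    (hu.continuous.mul hh.continuous).integrable_of_hasCompactSupport (hcu.mul_right)
  have := integral_mul_fderiv_eq_neg_fderiv_mul_of_integrable
    (f := u) (g := h) (v := EuclideanSpace.single k 1) h1 h2 h3
    (fun x _ => hu.differentiable (by norm_num) x) (fun x _ => hh.differentiable (by norm_num) x)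
  simp only [pd] at *
  linarith

/-- Main IBP workhorse: `∫ ∂_k(Q g) h = - ∫ Q g ∂_k h` in expanded form. -/
lemma ibp_pd_mul {Q g h : Euc d → ℝ} (hQ : ContDiff ℝ 1 Q) (hQc : HasCompactSupport Q)
    (hg : ContDiff ℝ 1 g) (hh : ContDiff ℝ 1 h) (k : Fin d) :
    ∫ x, (pd Q k x * g x + Q x * pd g k x) * h x = - ∫ x, (Q x * g x) * pd h k x := by
  have hu : ContDiff ℝ 1 (fun x => Q x * g x) := hQ.mul hg
  have hcu : HasCompactSupport (fun x => Q x * g x) := hQc.mul_right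
  have h1 := ibp_pd hu hcu hh k
  have h2 : ∀ x, pd (fun y => Q y * g y) k x = pd Q k x * g x + Q x * pd g k x := fun x =>
    pd_mul (hQ.differentiable (by norm_num) x) (hg.differentiable (by norm_num) x) k
  simpa only [h2] using h1

/-- **Self-adjointness (integration-by-parts) formula for `L₂+L₃`** (identity (4.35)):
for a nonnegative compactly supported `C¹` function `q` with `Ω = {q > 0}` and `α = 1/β`,
`∫_Ω q^α((L₂+L₃)w)·φ dx
  = −(β²/(1+β))∫_Ω q^{1+α}[(1+α)∇w:∇φ + (div w)(div φ) − tr(∇w·∇φ)]dx`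
for all `C²` vector fields `w, φ`, both integrals being absolutely convergent; in particular
`L₂+L₃` is symmetric in `L²(Ω; q^α dx)`. -/
theorem L23_integration_by_parts
    {d : ℕ} (hd : 1 ≤ d) {β : ℝ} (hβ : 0 < β)
    (q : Euc d → ℝ) (hq0 : ∀ x, 0 ≤ q x) (hq1 : ContDiff ℝ 1 q)
    (hqc : HasCompactSupport q)
    (w φ : Euc d → Euc d) (hw : ContDiff ℝ 2 w) (hφ : ContDiff ℝ 2 φ) :
    IntegrableOn (fun x => (q x) ^ β⁻¹ *
        @inner ℝ _ _ (L23op β β⁻¹ q w x) (φ x)) {x | 0 < q x} ∧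
    IntegrableOn (fun x => (q x) ^ (1 + β⁻¹) *
        ((1 + β⁻¹) * gradContr w φ x + diverg w x * diverg φ x - gradTrace w φ x))
      {x | 0 < q x} ∧
    (∫ x in {x | 0 < q x}, (q x) ^ β⁻¹ *
        @inner ℝ _ _ (L23op β β⁻¹ q w x) (φ x)) =
      -(β ^ 2 / (1 + β)) * ∫ x in {x | 0 < q x}, (q x) ^ (1 + β⁻¹) *
        ((1 + β⁻¹) * gradContr w φ x + diverg w x * diverg φ x - gradTrace w φ x) := by
  have hβ' : (0:ℝ) < β⁻¹ := inv_pos.2 hβ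
  set α : ℝ := β⁻¹ with hαdef
  have hp1 : (1:ℝ) ≤ 1 + α := by linarith
  have hp0 : (0:ℝ) < 1 + α := by linarith
  have hΩmeas : MeasurableSet {x : Euc d | 0 < q x} :=
    (isOpen_lt continuous_const hq1.continuous).measurableSet
  -- the weight Q = q^(1+α)
  set Q : Euc d → ℝ := fun x => q x ^ (1 + α) with hQdef
  have hQ : ContDiff ℝ 1 Q := by
    have h1 : ContDiff ℝ (1:ℕ) (fun t : ℝ => t ^ (1 + α)) :=
      Real.contDiff_rpow_const_of_le (by push_cast; linarith)
    exact h1.comp hq1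
  have hQc : HasCompactSupport Q := by
    have : HasCompactSupport ((fun t : ℝ => t ^ (1 + α)) ∘ q) :=
      hqc.comp_left (by simp [Real.zero_rpow (ne_of_gt hp0)])
    exact this
  have hq' : Differentiable ℝ q := hq1.differentiable (by norm_num)
  -- derivative of Q
  have pdQ : ∀ (k : Fin d) (x : Euc d),
      pd Q k x = (1 + α) * (q x ^ α * pd q k x) := by
    intro k x
    have h1 : HasFDerivAt Q (((1 + α) * q x ^ (1 + α - 1)) • fderiv ℝ q x) x :=
      (Real.hasDerivAt_rpow_const (Or.inr hp1)).comp_hasFDerivAt x (hq' x).hasFDerivAt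
    have h2 := h1.fderiv
    simp only [pd, h2, ContinuousLinearMap.smul_apply, smul_eq_mul]
    rw [show (1 + α - 1 : ℝ) = α by ring]
    ring
  have hQ0 : ∀ x : Euc d, q x = 0 → Q x = 0 := by
    intro x hx
    simp [hQdef, hx, Real.zero_rpow (ne_of_gt hp0)]
  have hpdQ0 : ∀ (k : Fin d) (x : Euc d), q x = 0 → pd Q k x = 0 := by
    intro k x hx
    rw [pdQ k x, hx, Real.zero_rpow (ne_of_gt hβ')]
    ring
  -- coordinates of w and φ
  have hwc : ∀ i, ContDiff ℝ 2 (fun z : Euc d => w z i) := fun i =>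
    (EuclideanSpace.proj (𝕜 := ℝ) i).contDiff.comp hw
  have hφc : ∀ i, ContDiff ℝ 2 (fun z : Euc d => φ z i) := fun i =>
    (EuclideanSpace.proj (𝕜 := ℝ) i).contDiff.comp hφ
  have hφ1 : ∀ i, ContDiff ℝ 1 (fun z : Euc d => φ z i) := fun i => (hφc i).of_le one_le_two
  have hpdw : ∀ i j, ContDiff ℝ 1 (fun x => pd (fun z : Euc d => w z i) j x) := fun i j =>
    contDiff_pd (hwc i) j
  have hpdφ : ∀ i j, ContDiff ℝ 1 (fun x => pd (fun z : Euc d => φ z i) j x) := fun i j =>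
    contDiff_pd (hφc i) j
  -- integrability helpers
  have hQcont : Continuous Q := hQ.continuous
  have hpdQcont : ∀ k, Continuous (fun x => pd Q k x) := fun k => cont_pd hQ k
  have hpdQc : ∀ k, HasCompactSupport (fun x => pd Q k x) := fun k =>
    hQc.fderiv_apply ℝ (EuclideanSpace.single k 1)
  have intQ : ∀ f : Euc d → ℝ, Continuous f → Integrable (fun x => Q x * f x) := fun f hf =>
    (hQcont.mul hf).integrable_of_hasCompactSupport hQc.mul_right
  have intpdQ : ∀ (k : Fin d) (f : Euc d → ℝ), Continuous f →
      Integrable (fun x => pd Q k x * f x) := fun k f hf =>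
    ((hpdQcont k).mul hf).integrable_of_hasCompactSupport (hpdQc k).mul_right
  have hφcont : ∀ i, Continuous (fun x => φ x i) := fun i => (hφ1 i).continuous
  have intIBP : ∀ (g : Euc d → ℝ), ContDiff ℝ 1 g → ∀ (k i : Fin d),
      Integrable (fun x => (pd Q k x * g x + Q x * pd g k x) * φ x i) := by
    intro g hg k i
    have h : (fun x => (pd Q k x * g x + Q x * pd g k x) * φ x i)
        = fun x => pd Q k x * (g x * φ x i) + Q x * (pd g k x * φ x i) := by
      funext x; ring
    rw [h]
    exact (intpdQ k _ (hg.continuous.mul (hφcont i))).add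
      (intQ _ ((cont_pd hg k).mul (hφcont i)))
  have intQ2 : ∀ (a b : Euc d → ℝ), Continuous a → Continuous b →
      Integrable (fun x => (Q x * a x) * b x) := by
    intro a b ha hb
    have h := intQ (fun x => a x * b x) (ha.mul hb)
    simpa [mul_assoc] using h
  -- the summand functions
  set T : Fin d → Fin d → Euc d → ℝ := fun i j x =>
    ((pd Q j x * pd (fun z => w z i) j x + Q x * pd (fun y => pd (fun z => w z i) j y) j x)
      + (1 + α)⁻¹ * pd Q i x * pd (fun z => w z j) j x
      - (1 + α)⁻¹ * pd Q j x * pd (fun z => w z j) i x) * φ x i with hTdef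
  set R : Fin d → Fin d → Euc d → ℝ := fun i j x =>
    (Q x * pd (fun z => w z i) j x) * pd (fun z => φ z i) j x
      + ((1 + α)⁻¹ * ((Q x * pd (fun z => w z j) j x) * pd (fun z => φ z i) i x)
      - (1 + α)⁻¹ * ((Q x * pd (fun z => w z j) i x) * pd (fun z => φ z i) j x)) with hRdef
  have iA : ∀ i j, Integrable (fun x =>
      (pd Q j x * pd (fun z => w z i) j x
        + Q x * pd (fun y => pd (fun z => w z i) j y) j x) * φ x i) := fun i j =>
    intIBP _ (hpdw i j) j i
  have iB : ∀ i j, Integrable (fun x =>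
      (pd Q i x * pd (fun z => w z j) j x
        + Q x * pd (fun y => pd (fun z => w z j) j y) i x) * φ x i) := fun i j =>
    intIBP _ (hpdw j j) i i
  have iC : ∀ i j, Integrable (fun x =>
      (pd Q j x * pd (fun z => w z j) i x
        + Q x * pd (fun y => pd (fun z => w z j) i y) j x) * φ x i) := fun i j =>
    intIBP _ (hpdw j i) j i
  have iR1 : ∀ i j, Integrable (fun x =>
      (Q x * pd (fun z => w z i) j x) * pd (fun z => φ z i) j x) := fun i j =>
    intQ2 _ _ (hpdw i j).continuous (hpdφ i j).continuous
  have iR2 : ∀ i j, Integrable (fun x =>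
      (Q x * pd (fun z => w z j) j x) * pd (fun z => φ z i) i x) := fun i j =>
    intQ2 _ _ (hpdw j j).continuous (hpdφ i i).continuous
  have iR3 : ∀ i j, Integrable (fun x =>
      (Q x * pd (fun z => w z j) i x) * pd (fun z => φ z i) j x) := fun i j =>
    intQ2 _ _ (hpdw j i).continuous (hpdφ i j).continuous
  have hTint : ∀ i j, Integrable (T i j) := by
    intro i j
    have hsplit : T i j = fun x =>
        ((pd Q j x * pd (fun z => w z i) j x
          + Q x * pd (fun y => pd (fun z => w z i) j y) j x) * φ x i)
        + ((1 + α)⁻¹ * ((pd Q i x * pd (fun z => w z j) j x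
            + Q x * pd (fun y => pd (fun z => w z j) j y) i x) * φ x i)
        - (1 + α)⁻¹ * ((pd Q j x * pd (fun z => w z j) i x
            + Q x * pd (fun y => pd (fun z => w z j) i y) j x) * φ x i)) := by
      funext x
      rw [hTdef]
      rw [pd_comm (hwc j) j i x]
      ring
    rw [hsplit]
    exact (iA i j).add (((iB i j).const_mul _).sub ((iC i j).const_mul _))
  have hRint : ∀ i j, Integrable (R i j) := by
    intro i j
    rw [hRdef]
    exact (iR1 i j).add (((iR2 i j).const_mul _).sub ((iR3 i j).const_mul _))
  have keyint : ∀ i j, ∫ x, T i j x = - ∫ x, R i j x := by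
    intro i j
    have hA := ibp_pd_mul hQ hQc (hpdw i j) (hφ1 i) j
    have hB := ibp_pd_mul hQ hQc (hpdw j j) (hφ1 i) i
    have hC := ibp_pd_mul hQ hQc (hpdw j i) (hφ1 i) j
    have hsplit : (fun x => T i j x) = fun x =>
        ((pd Q j x * pd (fun z => w z i) j x
          + Q x * pd (fun y => pd (fun z => w z i) j y) j x) * φ x i)
        + ((1 + α)⁻¹ * ((pd Q i x * pd (fun z => w z j) j x
            + Q x * pd (fun y => pd (fun z => w z j) j y) i x) * φ x i)
        - (1 + α)⁻¹ * ((pd Q j x * pd (fun z => w z j) i x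
            + Q x * pd (fun y => pd (fun z => w z j) i y) j x) * φ x i)) := by
      funext x
      rw [hTdef]
      rw [pd_comm (hwc j) j i x]
      ring
    have hRsplit : (fun x => R i j x) = fun x =>
        ((Q x * pd (fun z => w z i) j x) * pd (fun z => φ z i) j x)
        + ((1 + α)⁻¹ * ((Q x * pd (fun z => w z j) j x) * pd (fun z => φ z i) i x)
        - (1 + α)⁻¹ * ((Q x * pd (fun z => w z j) i x) * pd (fun z => φ z i) j x)) := by
      funext x; rw [hRdef]
    have iBC : Integrable (fun x =>
        (1 + α)⁻¹ * ((pd Q i x * pd (fun z => w z j) j x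
            + Q x * pd (fun y => pd (fun z => w z j) j y) i x) * φ x i)
        - (1 + α)⁻¹ * ((pd Q j x * pd (fun z => w z j) i x
            + Q x * pd (fun y => pd (fun z => w z j) i y) j x) * φ x i)) :=
      ((iB i j).const_mul _).sub ((iC i j).const_mul _)
    have iR23 : Integrable (fun x =>
        (1 + α)⁻¹ * ((Q x * pd (fun z => w z j) j x) * pd (fun z => φ z i) i x)
        - (1 + α)⁻¹ * ((Q x * pd (fun z => w z j) i x) * pd (fun z => φ z i) j x)) :=
      ((iR2 i j).const_mul _).sub ((iR3 i j).const_mul _)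
    rw [hsplit, hRsplit]
    rw [integral_add (iA i j) iBC,
      integral_sub ((iB i j).const_mul _) ((iC i j).const_mul _),
      integral_add (iR1 i j) iR23,
      integral_sub ((iR2 i j).const_mul _) ((iR3 i j).const_mul _),
      integral_const_mul, integral_const_mul, integral_const_mul, integral_const_mul]
    rw [hA, hB, hC]
    ring
  -- H is the right-hand side integrand
  set H : Euc d → ℝ := fun x => Q x *
    ((1 + α) * gradContr w φ x + diverg w x * diverg φ x - gradTrace w φ x) with hHdef
  have hcontgc : Continuous (fun x => gradContr w φ x) := by
    unfold gradContr
    exact continuous_finset_sum _ fun i _ => continuous_finset_sum _ fun j _ =>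
      (hpdw j i).continuous.mul (hpdφ j i).continuous
  have hcontdw : Continuous (fun x => diverg w x) := by
    unfold diverg
    exact continuous_finset_sum _ fun j _ => (hpdw j j).continuous
  have hcontdφ : Continuous (fun x => diverg φ x) := by
    unfold diverg
    exact continuous_finset_sum _ fun j _ => (hpdφ j j).continuous
  have hcontgt : Continuous (fun x => gradTrace w φ x) := by
    unfold gradTrace
    exact continuous_finset_sum _ fun i _ => continuous_finset_sum _ fun j _ =>
      (hpdw j i).continuous.mul (hpdφ i j).continuous
  have hHint : Integrable H := by
    rw [hHdef]
    exact intQ _ (((continuous_const.mul hcontgc).add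
      (hcontdw.mul hcontdφ)).sub hcontgt)
  have hsum : ∀ x, ∑ i, ∑ j, R i j x = (1 + α)⁻¹ * H x := by
    intro x
    have e1 : ∑ i, ∑ j, (Q x * pd (fun z => w z i) j x) * pd (fun z => φ z i) j x
        = Q x * gradContr w φ x := by
      rw [gradContr]
      simp only [Finset.mul_sum, mul_assoc]
      exact Finset.sum_comm
    have e2 : ∑ i, ∑ j, (Q x * pd (fun z => w z j) j x) * pd (fun z => φ z i) i x
        = Q x * (diverg w x * diverg φ x) := by
      rw [diverg, diverg]
      simp only [Finset.sum_mul_sum, Finset.mul_sum, Finset.sum_mul, mul_assoc]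
    have e3 : ∑ i, ∑ j, (Q x * pd (fun z => w z j) i x) * pd (fun z => φ z i) j x
        = Q x * gradTrace w φ x := by
      rw [gradTrace]
      simp only [Finset.mul_sum, mul_assoc]
    simp only [hRdef, hHdef, Finset.sum_add_distrib, Finset.sum_sub_distrib, ← Finset.mul_sum]
    rw [e1, e2, e3]
    field_simp
    ring
  set G : Euc d → ℝ := fun x => β * ∑ i, ∑ j, T i j x with hGdef
  have hGint : Integrable G := by
    rw [hGdef]
    exact (integrable_finset_sum _ fun i _ =>
      integrable_finset_sum _ fun j _ => hTint i j).const_mul β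
  have hSum1 : ∫ x, ∑ i, ∑ j, T i j x = ∑ i, ∑ j, ∫ x, T i j x := by
    rw [integral_finset_sum _ (fun i _ => integrable_finset_sum _ fun j _ => hTint i j)]
    exact Finset.sum_congr rfl fun i _ => integral_finset_sum _ fun j _ => hTint i j
  have hSum2 : ∫ x, ∑ i, ∑ j, R i j x = ∑ i, ∑ j, ∫ x, R i j x := by
    rw [integral_finset_sum _ (fun i _ => integrable_finset_sum _ fun j _ => hRint i j)]
    exact Finset.sum_congr rfl fun i _ => integral_finset_sum _ fun j _ => hRint i j
  have hGH : ∫ x, G x = -((β * (1 + α)⁻¹) * ∫ x, H x) := by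
    simp only [hGdef]
    rw [integral_const_mul, hSum1]
    rw [show (∑ i, ∑ j, ∫ x, T i j x) = ∑ i, ∑ j, (- ∫ x, R i j x) from
      Finset.sum_congr rfl fun i _ => Finset.sum_congr rfl fun j _ => keyint i j]
    rw [show (∑ i : Fin d, ∑ j : Fin d, (- ∫ x, R i j x)) = -∑ i : Fin d, ∑ j : Fin d, ∫ x, R i j x from by
      simp [Finset.sum_neg_distrib]]
    rw [← hSum2]
    rw [show (∫ x, ∑ i, ∑ j, R i j x) = ∫ x, (1 + α)⁻¹ * H x from by
      exact congrArg _ (funext hsum)]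
    rw [integral_const_mul]
    ring
  -- pointwise identification of the integrands
  have hEqOn : EqOn (fun x => q x ^ α * @inner ℝ _ _ (L23op β α q w x) (φ x)) G
      {x : Euc d | 0 < q x} := by
    intro x hx
    have hqx : 0 < q x := hx
    have hprod : ∀ (i j : Fin d),
        pd (fun y => q y ^ (1 + α) * pd (fun z => w z i) j y) j x
          = pd Q j x * pd (fun z => w z i) j x
            + Q x * pd (fun y => pd (fun z => w z i) j y) j x := by
      intro i j
      have h := pd_mul (f := fun y : Euc d => q y ^ (1 + α))
        (g := fun y => pd (fun z => w z i) j y) (x := x)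
        (hQ.differentiable (by norm_num) x) ((hpdw i j).differentiable (by norm_num) x) j
      simpa [← hQdef] using h
    have hb : q x ^ α * q x ^ (-α) = 1 := by
      rw [Real.rpow_neg (hq0 x)]
      exact mul_inv_cancel₀ (ne_of_gt (Real.rpow_pos_of_pos hqx α))
    have hc : ∀ k, q x ^ α * pd q k x = (1 + α)⁻¹ * pd Q k x := by
      intro k; rw [pdQ k x]; field_simp
    show q x ^ α * @inner ℝ _ _ (L23op β α q w x) (φ x) = G x
    simp only [hGdef, hTdef, L23op, PiLp.inner_apply, RCLike.inner_apply,
      euc_equiv_symm_apply, conj_trivial]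
    simp only [Finset.mul_sum, Finset.sum_mul]
    apply Finset.sum_congr rfl
    intro i _
    apply Finset.sum_congr rfl
    intro j _
    rw [hprod i j]
    linear_combination (β * φ x i * (pd Q j x * pd (fun z => w z i) j x
        + Q x * pd (fun y => pd (fun z => w z i) j y) j x)) * hb
      + (β * φ x i * pd (fun z => w z j) j x) * (hc i)
      - (β * φ x i * pd (fun z => w z j) i x) * (hc j)
  have hG0 : ∀ x ∉ {x : Euc d | 0 < q x}, G x = 0 := by
    intro x hx
    have hq0x : q x = 0 := le_antisymm (not_lt.1 hx) (hq0 x)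
    have h1 := hQ0 x hq0x
    have h2 : ∀ k, pd Q k x = 0 := fun k => hpdQ0 k x hq0x
    simp [hGdef, hTdef, h1, h2]
  have hH0 : ∀ x ∉ {x : Euc d | 0 < q x}, H x = 0 := by
    intro x hx
    have hq0x : q x = 0 := le_antisymm (not_lt.1 hx) (hq0 x)
    simp [hHdef, hQ0 x hq0x]
  have hconst : β * (1 + α)⁻¹ = β ^ 2 / (1 + β) := by
    rw [hαdef]
    rw [show (1 + β⁻¹) = (β + 1) / β from by field_simp]
    field_simp
    ring
  refine ⟨?_, ?_, ?_⟩
  · exact (hGint.integrableOn).congr_fun hEqOn.symm hΩmeas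
  · exact hHint.integrableOn
  · calc (∫ x in {x : Euc d | 0 < q x}, q x ^ α * @inner ℝ _ _ (L23op β α q w x) (φ x))
        = ∫ x in {x : Euc d | 0 < q x}, G x := setIntegral_congr_fun hΩmeas hEqOn
      _ = ∫ x, G x := setIntegral_eq_integral_of_forall_compl_eq_zero hG0
      _ = -((β * (1 + α)⁻¹) * ∫ x, H x) := hGH
      _ = -(β ^ 2 / (1 + β)) * ∫ x, H x := by rw [hconst]; ring
      _ = -(β ^ 2 / (1 + β)) * ∫ x in {x : Euc d | 0 < q x}, H x := by
          rw [setIntegral_eq_integral_of_forall_compl_eq_zero hH0]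
end
end
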